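/- arXiv:1810.08171 — 8 statements merged into one kernel-verified Lean document; each statement's English description precedes it below -/
import Mathlib

section
/- Let F be a field, let n, d, t be positive integers with n ≥ 2d and t ≤ d, and let ε ∈ (0,1). Suppose A ∈ F^{n×n} is ε-far from rank at most d, and let R, C ⊆ {1,…,n} with |R| = |C| = t be such that the submatrix A_{R,C} is invertible (i.e., rank(A_{R,C}) = t). Then |aug(R,C)| ≥ εn²/3. -/
open Matrix Finset
open scoped Classical

/-- The rank of the submatrix of `A` with rows indexed by `R` and columns by `C`. -/
noncomputable def subRank {F : Type} [Field F] {n : ℕ} (A : Matrix (Fin n) (Fin n) F)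
    (R C : Finset (Fin n)) : ℕ :=
  (A.submatrix (fun i : {x // x ∈ R} => i.1) (fun j : {x // x ∈ C} => j.1)).rank

/-- The augment set `aug(R,C)`: pairs `(r,c)` with `r ∉ R`, `c ∉ C` such that adjoining the row
`r` and the column `c` increases the rank of the submatrix. -/
noncomputable def augSet {F : Type} [Field F] {n : ℕ} (A : Matrix (Fin n) (Fin n) F)
    (R C : Finset (Fin n)) : Finset (Fin n × Fin n) :=
  Finset.univ.filter fun p : Fin n × Fin n =>
    p.1 ∉ R ∧ p.2 ∉ C ∧ subRank A R C < subRank A (insert p.1 R) (insert p.2 C)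

/-!
The skeleton (CUR) matrix `B = A_{·,C} A_{R,C}⁻¹ A_{R,·}` has rank at most `t ≤ d` and agrees
with `A` on the rows `R` and the columns `C`. If `A r c ≠ B r c`, then `A r c - B r c` is the
Schur complement of `A_{R,C}` in `A_{R ∪ {r}, C ∪ {c}}`, so this larger submatrix is invertible
and `(r, c) ∈ aug(R, C)`. Hence the at least `εn²` entries where `A` and `B` differ all lie in
`aug(R, C)`.
-/

namespace Matrix

variable {F : Type*} [Field F]

theorem isUnit_of_rank_eq_card {k : Type*} [Fintype k] [DecidableEq k] {S : Matrix k k F}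
    (h : S.rank = Fintype.card k) : IsUnit S := by
  rw [← linearIndependent_cols_iff_isUnit, linearIndependent_iff_card_eq_finrank_span, ← h,
    rank_eq_finrank_span_cols]
  rfl

section Skeleton

variable {m n k : Type*} [Fintype k] [DecidableEq k] (A : Matrix m n F) (f : k → m) (g : k → n)

noncomputable def skeleton : Matrix m n F :=
  A.submatrix id g * (A.submatrix f g)⁻¹ * A.submatrix f id

theorem rank_skeleton_le [Fintype n] : (skeleton A f g).rank ≤ Fintype.card k := by
  rw [skeleton, Matrix.mul_assoc]
  exact (rank_mul_le_right _ _).trans (rank_le_card_height _)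

variable {A f g}

theorem submatrix_skeleton_left (h : IsUnit (A.submatrix f g).det) :
    (skeleton A f g).submatrix f id = A.submatrix f id := by
  show A.submatrix f g * (A.submatrix f g)⁻¹ * A.submatrix f id = _
  rw [mul_nonsing_inv _ h, Matrix.one_mul]

theorem submatrix_skeleton_right (h : IsUnit (A.submatrix f g).det) :
    (skeleton A f g).submatrix id g = A.submatrix id g := by
  show A.submatrix id g * (A.submatrix f g)⁻¹ * A.submatrix f g = _
  rw [Matrix.mul_assoc, nonsing_inv_mul _ h, Matrix.mul_one]

theorem det_submatrix_sumElim (h : IsUnit (A.submatrix f g).det) (r : m) (c : n) :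
    (A.submatrix (Sum.elim f fun _ : Unit => r) (Sum.elim g fun _ : Unit => c)).det =
      (A.submatrix f g).det * (A r c - skeleton A f g r c) := by
  have : Invertible (A.submatrix f g) := invertibleOfIsUnitDet _ h
  have hblocks : A.submatrix (Sum.elim f fun _ : Unit => r) (Sum.elim g fun _ : Unit => c) =
      fromBlocks (A.submatrix f g) (A.submatrix f fun _ : Unit => c)
        (A.submatrix (fun _ : Unit => r) g)
        (A.submatrix (fun _ : Unit => r) fun _ : Unit => c) := by
    ext (i | i) (j | j) <;> rfl
  rw [hblocks, det_fromBlocks₁₁, det_unique (n := Unit), invOf_eq_nonsing_inv]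
  rfl

theorem rank_submatrix_sumElim_of_ne (h : IsUnit (A.submatrix f g).det) {r : m} {c : n}
    (hrc : A r c ≠ skeleton A f g r c) :
    (A.submatrix (Sum.elim f fun _ : Unit => r) (Sum.elim g fun _ : Unit => c)).rank =
      Fintype.card k + 1 := by
  refine (rank_of_det_ne_zero ?_).trans (by rw [Fintype.card_sum, Fintype.card_unit])
  rw [det_submatrix_sumElim h]
  exact mul_ne_zero h.ne_zero (sub_ne_zero.mpr hrc)

end Skeleton

end Matrix

theorem rank_submatrix_le_subRank {F : Type} [Field F] {n : ℕ} (A : Matrix (Fin n) (Fin n) F)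
    {R C : Finset (Fin n)} {k l : Type*} [Fintype k] [Fintype l] {f : k → Fin n} {g : l → Fin n}
    (hf : ∀ i, f i ∈ R) (hg : ∀ j, g j ∈ C) :
    (A.submatrix f g).rank ≤ subRank A R C :=
  rank_submatrix_le (A.submatrix Subtype.val Subtype.val) (fun i => ⟨f i, hf i⟩)
    fun j => ⟨g j, hg j⟩

theorem exists_rank_le_filter_ne_subset_augSet {F : Type} [Field F] {n t : ℕ}
    (A : Matrix (Fin n) (Fin n) F) {R C : Finset (Fin n)} (hR : R.card = t) (hC : C.card = t)
    (hrank : subRank A R C = t) :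
    ∃ B : Matrix (Fin n) (Fin n) F, B.rank ≤ t ∧
      univ.filter (fun p : Fin n × Fin n => A p.1 p.2 ≠ B p.1 p.2) ⊆ augSet A R C := by
  set eR := (R.orderIsoOfFin hR).toEquiv
  set eC := (C.orderIsoOfFin hC).toEquiv
  set f : Fin t → Fin n := fun i => eR i
  set g : Fin t → Fin n := fun j => eC j
  have hS : IsUnit (A.submatrix f g).det := by
    refine (isUnit_iff_isUnit_det _).mp (isUnit_of_rank_eq_card ?_)
    change ((A.submatrix Subtype.val Subtype.val).submatrix eR eC).rank = _
    rw [rank_submatrix, Fintype.card_fin]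
    exact hrank
  refine ⟨skeleton A f g, by simpa using rank_skeleton_le A f g, ?_⟩
  rintro ⟨r, c⟩ hrc
  replace hrc : A r c ≠ skeleton A f g r c := (mem_filter.mp hrc).2
  have hr : r ∉ R := fun hr => hrc <| Eq.symm <| by
    simpa [f] using congrFun (congrFun (submatrix_skeleton_left hS) (eR.symm ⟨r, hr⟩)) c
  have hc : c ∉ C := fun hc => hrc <| Eq.symm <| by
    simpa [g] using congrFun (congrFun (submatrix_skeleton_right hS) r) (eC.symm ⟨c, hc⟩)
  refine mem_filter.mpr ⟨mem_univ _, hr, hc, ?_⟩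
  calc subRank A R C = t := hrank
    _ < t + 1 := t.lt_succ_self
    _ = (A.submatrix (Sum.elim f fun _ : Unit => r) (Sum.elim g fun _ : Unit => c)).rank := by
      rw [rank_submatrix_sumElim_of_ne hS hrc, Fintype.card_fin]
    _ ≤ subRank A (insert r R) (insert c C) :=
      rank_submatrix_le_subRank A
        (Sum.rec (fun i => mem_insert_of_mem (eR i).2) fun _ => mem_insert_self r R)
        (Sum.rec (fun j => mem_insert_of_mem (eC j).2) fun _ => mem_insert_self c C)

theorem stmt0_general {F : Type} [Field F] {n d t : ℕ}
    (htd : t ≤ d) {ε : ℝ}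
    (A : Matrix (Fin n) (Fin n) F)
    (hfar : ∀ B : Matrix (Fin n) (Fin n) F, B.rank ≤ d →
      ε * (n : ℝ) ^ 2 ≤ ((Finset.univ.filter
        fun p : Fin n × Fin n => A p.1 p.2 ≠ B p.1 p.2).card : ℝ))
    (R C : Finset (Fin n)) (hR : R.card = t) (hC : C.card = t)
    (hrank : subRank A R C = t) :
    ε * (n : ℝ) ^ 2 / 3 ≤ ((augSet A R C).card : ℝ) := by
  obtain ⟨B, hBrank, hBaug⟩ := exists_rank_le_filter_ne_subset_augSet A hR hC hrank
  have hdisagree := hfar B (hBrank.trans htd)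
  have hcard : ((univ.filter fun p : Fin n × Fin n => A p.1 p.2 ≠ B p.1 p.2).card : ℝ) ≤
      (augSet A R C).card := by
    exact_mod_cast card_le_card hBaug
  have hnonneg : (0 : ℝ) ≤ (augSet A R C).card := Nat.cast_nonneg _
  linarith

theorem stmt0 {F : Type} [Field F] {n d t : ℕ} (hn : 0 < n) (hd : 0 < d) (ht : 0 < t)
    (hnd : 2 * d ≤ n) (htd : t ≤ d) {ε : ℝ} (hε0 : 0 < ε) (hε1 : ε < 1)
    (A : Matrix (Fin n) (Fin n) F)
    (hfar : ∀ B : Matrix (Fin n) (Fin n) F, B.rank ≤ d →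
      ε * (n : ℝ) ^ 2 ≤ ((Finset.univ.filter
        fun p : Fin n × Fin n => A p.1 p.2 ≠ B p.1 p.2).card : ℝ))
    (R C : Finset (Fin n)) (hR : R.card = t) (hC : C.card = t)
    (hrank : subRank A R C = t) :
    ε * (n : ℝ) ^ 2 / 3 ≤ ((augSet A R C).card : ℝ) :=
  stmt0_general htd A hfar R C hR hC hrank
end

section
/- Let F be a field, A ∈ F^{n×n}, and R, C ⊆ {1,…,n}. Let L be a positive integer and set η = 2^{−L}. Suppose that for every i ∈ {1,…,L}, the number of rows r ∉ R with count_r ≥ 2^{i−1}ηn is less than n/2^i. Then |aug(R,C)| = ∑_{r ∉ R} count_r ≤ (ηn²/2)(L+2). (Equivalently: if A, R, C satisfy |aug(R,C)| > (ηn²/2)(L+2), then (R,C) has some augment pattern i ∈ {1,…,L}, meaning at least n/2^i rows r ∉ R satisfy count_r ≥ 2^{i−1}ηn.) -/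
/-!
Dyadic layer-cake bound: since `count_r ≤ n = 2^L η n`, each `count_r` is at most `η n` plus
the sum of the thresholds `2^(i-1) η n`, `1 ≤ i ≤ L`, that it reaches. Summing over `r ∉ R`,
level `i` contributes `2^(i-1) η n` for each of fewer than `n / 2^i` rows, i.e. at most
`η n² / 2`, and the base term contributes at most `η n²`.
-/

open Matrix Finset
open scoped Classical

/-- `count_r`: the number of columns `c ∉ C` such that `(r, c) ∈ aug(R, C)`. -/
noncomputable def countAug {F : Type} [Field F] {n : ℕ} (A : Matrix (Fin n) (Fin n) F)
    (R C : Finset (Fin n)) (r : Fin n) : ℕ :=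
  (Finset.univ.filter fun c : Fin n => (r, c) ∈ augSet A R C).card

lemma sum_Icc_two_pow_sub_one_mul (a : ℝ) (M : ℕ) :
    ∑ i ∈ Icc 1 M, (2 : ℝ) ^ (i - 1) * a = (2 ^ M - 1) * a := by
  induction M with
  | zero => simp
  | succ M ih =>
    rw [sum_Icc_succ_top (by omega), ih, Nat.add_sub_cancel]
    ring

noncomputable def dyadicLayers (a : ℝ) (L : ℕ) (x : ℝ) : ℝ :=
  ∑ i ∈ Icc 1 L, if (2 : ℝ) ^ (i - 1) * a ≤ x then (2 : ℝ) ^ (i - 1) * a else 0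

lemma le_add_dyadicLayers {a : ℝ} (ha : 0 ≤ a) (L : ℕ) {x : ℝ} (hx : x ≤ 2 ^ L * a) :
    x ≤ a + dyadicLayers a L x := by
  induction L with
  | zero => simpa [dyadicLayers] using hx
  | succ L ih =>
    unfold dyadicLayers at ih ⊢
    by_cases htop : (2 : ℝ) ^ L * a ≤ x
    · have hall : ∀ i ∈ Icc 1 (L + 1),
          (if (2 : ℝ) ^ (i - 1) * a ≤ x then (2 : ℝ) ^ (i - 1) * a else 0)
            = (2 : ℝ) ^ (i - 1) * a := by
        intro i hi
        refine if_pos (le_trans ?_ htop)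
        gcongr
        · norm_num
        · exact Nat.sub_le_of_le_add (mem_Icc.mp hi).2
      rw [sum_congr rfl hall, sum_Icc_two_pow_sub_one_mul]
      linarith
    · rw [sum_Icc_succ_top (by omega), Nat.add_sub_cancel, if_neg htop]
      linarith [ih (not_le.mp htop).le]

lemma sum_le_card_mul_add_sum_card_filter {ι : Type*} (s : Finset ι) (f : ι → ℝ) {a : ℝ}
    (ha : 0 ≤ a) (L : ℕ) (hf : ∀ x ∈ s, f x ≤ 2 ^ L * a) :
    ∑ x ∈ s, f x ≤ #s * a +
      ∑ i ∈ Icc 1 L, #{x ∈ s | (2 : ℝ) ^ (i - 1) * a ≤ f x} * ((2 : ℝ) ^ (i - 1) * a) := by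
  calc ∑ x ∈ s, f x ≤ ∑ x ∈ s, (a + dyadicLayers a L (f x)) :=
        sum_le_sum fun x hx => le_add_dyadicLayers ha L (hf x hx)
    _ = _ := by
      simp only [dyadicLayers, sum_add_distrib, sum_const, nsmul_eq_mul]
      rw [sum_comm]
      simp only [← sum_filter, sum_const, nsmul_eq_mul]

lemma mul_two_pow_pred_le_of_lt_div {c m b : ℝ} {i : ℕ} (hi : 1 ≤ i) (hb : 0 ≤ b)
    (hc : c < m / 2 ^ i) : c * (2 ^ (i - 1) * b) ≤ m * b / 2 := by
  have h2i : (2 : ℝ) ^ i = 2 ^ (i - 1) * 2 := by rw [← pow_succ, Nat.sub_add_cancel hi]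
  calc c * (2 ^ (i - 1) * b) ≤ m / 2 ^ i * (2 ^ (i - 1) * b) := by gcongr
    _ = m * b / 2 := by rw [h2i]; field_simp

lemma card_augSet_eq_sum_countAug {F : Type} [Field F] {n : ℕ} (A : Matrix (Fin n) (Fin n) F)
    (R C : Finset (Fin n)) :
    (augSet A R C).card = ∑ r ∈ Rᶜ, countAug A R C r := by
  rw [card_eq_sum_card_fiberwise (f := Prod.fst) (t := Rᶜ)
    fun p hp => by simpa [augSet] using (mem_filter.mp hp).2.1]
  refine sum_congr rfl fun r _ => (card_nbij (fun c => (r, c)) ?_ ?_ ?_).symm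
  · intro c hc
    simpa using hc
  · intro c _ c' _ h
    exact (Prod.mk.inj h).2
  · rintro ⟨r', c⟩ hp
    obtain ⟨hp, rfl⟩ := mem_filter.mp hp
    exact ⟨c, by simpa using hp, rfl⟩

lemma countAug_le {F : Type} [Field F] {n : ℕ} (A : Matrix (Fin n) (Fin n) F)
    (R C : Finset (Fin n)) (r : Fin n) : countAug A R C r ≤ n :=
  (card_filter_le _ _).trans_eq (card_fin n)

theorem stmt1_general {F : Type} [Field F] {n : ℕ} (A : Matrix (Fin n) (Fin n) F)
    (R C : Finset (Fin n)) (L : ℕ) (η : ℝ) (hη : η = (2 : ℝ)⁻¹ ^ L)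
    (hsmall : ∀ i ∈ Finset.Icc 1 L,
      ((Finset.univ.filter fun r : Fin n =>
          r ∉ R ∧ (2 : ℝ) ^ (i - 1) * η * (n : ℝ) ≤ (countAug A R C r : ℝ)).card : ℝ)
        < (n : ℝ) / 2 ^ i) :
    (augSet A R C).card = ∑ r ∈ Rᶜ, countAug A R C r ∧
      ((augSet A R C).card : ℝ) ≤ η * (n : ℝ) ^ 2 / 2 * ((L : ℝ) + 2) := by
  have hcard := card_augSet_eq_sum_countAug A R C
  refine ⟨hcard, ?_⟩
  have ha : 0 ≤ η * n := by rw [hη]; positivity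
  have htop : (2 : ℝ) ^ L * (η * n) = n := by rw [hη, ← mul_assoc, ← mul_pow]; norm_num
  set a : ℝ := η * n with ha_def
  have hlevel (i : ℕ) (hi : i ∈ Icc 1 L) :
      (#{r ∈ Rᶜ | (2 : ℝ) ^ (i - 1) * a ≤ countAug A R C r} : ℝ) * (2 ^ (i - 1) * a)
        ≤ n * a / 2 := by
    have hrows : #{r ∈ Rᶜ | (2 : ℝ) ^ (i - 1) * a ≤ countAug A R C r}
        = #{r | r ∉ R ∧ (2 : ℝ) ^ (i - 1) * η * n ≤ countAug A R C r} := by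
      congr 1
      ext r; simp [ha_def, mul_assoc]
    exact mul_two_pow_pred_le_of_lt_div (mem_Icc.mp hi).1 ha (hrows ▸ hsmall i hi)
  have hRc : (#Rᶜ : ℝ) ≤ n := by exact_mod_cast (card_le_univ Rᶜ).trans_eq (card_fin n)
  calc ((augSet A R C).card : ℝ) = ∑ r ∈ Rᶜ, (countAug A R C r : ℝ) := by
        rw [hcard, Nat.cast_sum]
    _ ≤ #Rᶜ * a + ∑ i ∈ Icc 1 L,
          #{r ∈ Rᶜ | (2 : ℝ) ^ (i - 1) * a ≤ countAug A R C r} * ((2 : ℝ) ^ (i - 1) * a) :=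
        sum_le_card_mul_add_sum_card_filter _ _ ha L fun r _ => by
          rw [htop]; exact_mod_cast countAug_le A R C r
    _ ≤ n * a + ∑ _i ∈ Icc 1 L, n * a / 2 := by gcongr with i hi; exact hlevel i hi
    _ = η * (n : ℝ) ^ 2 / 2 * ((L : ℝ) + 2) := by
        rw [sum_const, Nat.card_Icc, nsmul_eq_mul, Nat.add_sub_cancel, ha_def]; ring

theorem stmt1 {F : Type} [Field F] {n : ℕ} (A : Matrix (Fin n) (Fin n) F)
    (R C : Finset (Fin n)) (L : ℕ) (hL : 0 < L) (η : ℝ) (hη : η = (2 : ℝ)⁻¹ ^ L)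
    (hsmall : ∀ i ∈ Finset.Icc 1 L,
      ((Finset.univ.filter fun r : Fin n =>
          r ∉ R ∧ (2 : ℝ) ^ (i - 1) * η * (n : ℝ) ≤ (countAug A R C r : ℝ)).card : ℝ)
        < (n : ℝ) / 2 ^ i) :
    (augSet A R C).card = ∑ r ∈ Rᶜ, countAug A R C r ∧
      ((augSet A R C).card : ℝ) ≤ η * (n : ℝ) ^ 2 / 2 * ((L : ℝ) + 2) :=
  stmt1_general A R C L η hη hsmall
end

section
/- For every real η ∈ (0, 1/2), every integer i ≥ 1 with 2^{i−1}η ≤ 1, and every real c > 0, it holds that (1 − (1 − 2^{−i})^{c·2^i}) · (1 − (1 − 2^{i−1}η)^{c/(2^i η)}) ≥ 1 − 2e^{−c/2}. -/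
lemma one_sub_pow_le_exp (x t : ℝ) (hx0 : 0 ≤ x) (hx1 : x ≤ 1) (ht : 0 ≤ t) :
    (1 - x) ^ t ≤ Real.exp (-(x * t)) := by
  have h1 : (1 : ℝ) - x ≤ Real.exp (-x) := by
    have := Real.add_one_le_exp (-x); linarith
  calc (1 - x) ^ t ≤ (Real.exp (-x)) ^ t :=
        Real.rpow_le_rpow (by linarith) h1 ht
    _ = Real.exp (-(x * t)) := by
        rw [← Real.exp_mul]; ring_nf

theorem stmt2 (η : ℝ) (hη0 : 0 < η) (hη : η < 1 / 2) (i : ℕ) (hi : 1 ≤ i)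
    (hiη : 2 ^ (i - 1) * η ≤ 1) (c : ℝ) (hc : 0 < c) :
    1 - 2 * Real.exp (-c / 2) ≤
      (1 - (1 - ((2 : ℝ) ^ i)⁻¹) ^ (c * 2 ^ i)) *
        (1 - (1 - 2 ^ (i - 1) * η) ^ (c / (2 ^ i * η))) := by
  set E := Real.exp (-c / 2) with hE
  have hpi : (0 : ℝ) < 2 ^ i := by positivity
  have hpi1 : (0 : ℝ) < 2 ^ (i - 1) := by positivity
  have h2i : (2 : ℝ) ^ (i - 1) * 2 = 2 ^ i := by
    rw [← pow_succ]
    congr 1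
    omega
  -- first factor
  have hx1 : ((2 : ℝ) ^ i)⁻¹ ≤ 1 := by
    rw [inv_le_one_iff₀]; right; exact one_le_pow₀ one_le_two
  have ha : (1 - ((2 : ℝ) ^ i)⁻¹) ^ (c * 2 ^ i) ≤ E := by
    have h := one_sub_pow_le_exp ((2 : ℝ) ^ i)⁻¹ (c * 2 ^ i)
      (by positivity) hx1 (by positivity)
    have heq : ((2 : ℝ) ^ i)⁻¹ * (c * 2 ^ i) = c := by field_simp
    rw [heq] at h
    refine h.trans ?_
    rw [hE]
    apply Real.exp_le_exp.2
    linarith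
  have hb : (1 - 2 ^ (i - 1) * η) ^ (c / (2 ^ i * η)) ≤ E := by
    have h := one_sub_pow_le_exp (2 ^ (i - 1) * η) (c / (2 ^ i * η))
      (by positivity) hiη (by positivity)
    have heq : (2 : ℝ) ^ (i - 1) * η * (c / (2 ^ i * η)) = c / 2 := by
      rw [← h2i]; field_simp
    rw [heq] at h
    refine h.trans ?_
    rw [hE]
    apply Real.exp_le_exp.2
    linarith
  have ha0 : 0 ≤ (1 - ((2 : ℝ) ^ i)⁻¹) ^ (c * 2 ^ i) :=
    Real.rpow_nonneg (by linarith) _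
  have hb0 : 0 ≤ (1 - 2 ^ (i - 1) * η) ^ (c / (2 ^ i * η)) :=
    Real.rpow_nonneg (by linarith) _
  nlinarith [mul_nonneg ha0 hb0]
end

section
/- Let F be a finite field, let d ≥ 1 be an integer, let γ ∈ (0, 1/2), and let r ≥ 1, t ≥ 1 be integers with t ≤ γ²d². For each k ∈ {1,…,t}, let v₁^{(k)}, …, v_{s_k}^{(k)} ∈ F^d be linearly independent vectors, and set s = max_k s_k; assume s + r ≤ γd. Let w₁, …, w_r be independent random vectors, where each w_i is uniformly distributed on a set S_i ⊆ F^d with |S_i| ≥ |F|^{(1−γ)d}. Then the probability that, for every k ∈ {1,…,t}, the vectors v₁^{(k)}, …, v_{s_k}^{(k)}, w₁, …, w_r are linearly independent is at least 1 − γ³d³ / |F|^{(1−2γ)d}. -/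
open Finset
open scoped Classical

/-! If `v⁽ᵏ⁾, w` is dependent although `v⁽ᵏ⁾` is independent, some `wᵢ` lies in the span of
`v⁽ᵏ⁾` and the other `wⱼ`: a subspace of dimension at most `sₖ + r - 1 ≤ γd` that does not depend
on `wᵢ`. Fixing the other coordinates, `wᵢ` hits it with probability at most
`|F|^{γd} / |Sᵢ| ≤ |F|^{-(1-2γ)d}`, and a union bound over the `tr ≤ γ³d³` pairs `(k, i)`
finishes the proof. -/

open Submodule in
theorem LinearIndependent.exists_mem_span_of_not_linearIndependent_sumElim
    {K V ι κ : Type*} [DivisionRing K] [AddCommGroup V] [Module K V] [Fintype ι] [Fintype κ]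
    {v : ι → V} {w : κ → V} (hv : LinearIndependent K v)
    (h : ¬ LinearIndependent K (Sum.elim v w)) :
    ∃ j, w j ∈ span K (Set.range v ∪ w '' {j}ᶜ) := by
  obtain ⟨g, hg, x, hx⟩ := Fintype.not_linearIndependent_iff.mp h
  obtain ⟨j, hj⟩ : ∃ j, g (.inr j) ≠ 0 := by
    by_contra! hw
    rw [Fintype.sum_sum_type] at hg
    simp only [Sum.elim_inl, Sum.elim_inr, hw, zero_smul, Finset.sum_const_zero, add_zero] at hg
    have hv0 := Fintype.linearIndependent_iff.mp hv _ hg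
    rcases x with i | i
    exacts [hx (hv0 i), hx (hw i)]
  refine ⟨j, (smul_mem_iff _ hj).mp ?_⟩
  have hwj : g (.inr j) • w j = -∑ x ∈ {Sum.inr j}ᶜ, g x • Sum.elim v w x := by
    rw [eq_neg_iff_add_eq_zero, ← hg, Fintype.sum_eq_add_sum_compl (Sum.inr j)]
    rfl
  rw [hwj]
  refine neg_mem (sum_mem fun x hx => smul_mem _ _ (subset_span ?_))
  rcases x with i | i
  · exact .inl ⟨i, rfl⟩
  · exact .inr ⟨i, by simpa using hx, rfl⟩

theorem Fintype.card_filter_piFinset_mem_le {ι α : Type*} [Fintype ι] [DecidableEq ι]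
    (S : ι → Finset α) (i : ι) (U : (ι → α) → Set α)
    (hU : ∀ w w', (∀ j ≠ i, w j = w' j) → U w = U w') {M : ℕ} (hM : ∀ w, (U w).ncard ≤ M)
    (hfin : ∀ w, (U w).Finite) :
    #{w ∈ Fintype.piFinset S | w i ∈ U w} ≤ M * ∏ j ∈ univ.erase i, #(S j) := by
  rcases (S i).eq_empty_or_nonempty with hSi | ⟨a, ha⟩
  · simp [Fintype.piFinset_eq_empty.mpr ⟨i, hSi⟩]
  rw [← Fintype.card_filter_piFinset_eq_of_mem S i ha]
  refine card_le_mul_card_image_of_maps_to (f := fun w => Function.update w i a) ?_ M ?_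
  · intro w hw
    simp only [mem_filter, Fintype.mem_piFinset] at hw ⊢
    refine ⟨fun j => ?_, Function.update_self ..⟩
    rcases eq_or_ne j i with rfl | hj
    · simpa using ha
    · simpa [hj] using hw.1 j
  · intro u _
    rw [← Set.ncard_coe_finset]
    have hagree : ∀ w, Function.update w i a = u → ∀ j ≠ i, w j = u j := by
      rintro w rfl j hj
      exact (Function.update_of_ne hj ..).symm
    refine (Set.ncard_le_ncard_of_injOn (fun w => w i) ?_ ?_ (hfin u)).trans (hM u)
    · intro w hw
      simp only [mem_coe, mem_filter] at hw
      exact hU w u (hagree w hw.2) ▸ hw.1.2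
    · intro w hw w' hw' hi
      simp only [mem_coe, mem_filter] at hw hw'
      funext j
      rcases eq_or_ne j i with rfl | hj
      · exact hi
      · rw [hagree w hw.2 j hj, hagree w' hw'.2 j hj]

open Submodule in
theorem card_filter_piFinset_mem_span_le {K V ι κ : Type*} [DivisionRing K] [Fintype K]
    [AddCommGroup V] [Module K V] [Finite V] [Fintype ι] [Fintype κ] [DecidableEq κ]
    (v : ι → V) (S : κ → Finset V) (i : κ) :
    #{w ∈ Fintype.piFinset S | w i ∈ span K (Set.range v ∪ w '' {i}ᶜ)} ≤
      Fintype.card K ^ (Fintype.card ι + (Fintype.card κ - 1)) * ∏ j ∈ univ.erase i, #(S j) := by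
  refine Fintype.card_filter_piFinset_mem_le S i _ (fun w w' h => ?_) (fun w => ?_)
    (fun _ => Set.toFinite _)
  · have himage : w '' {i}ᶜ = w' '' {i}ᶜ := Set.image_congr fun j hj => h j hj
    rw [himage]
  · have hrank : Module.finrank K (span K (Set.range v ∪ w '' {i}ᶜ)) ≤
        Fintype.card ι + (Fintype.card κ - 1) := by
      rw [Set.image_eq_range, ← Set.Sum.elim_range]
      refine (finrank_range_le_card _).trans ?_
      simp [Fintype.card_sum, filter_ne']
    rw [← Nat.card_coe_set_eq, SetLike.coe_sort_coe, Module.natCard_eq_pow_finrank (K := K),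
      Nat.card_eq_fintype_card]
    exact Nat.pow_le_pow_right Fintype.card_pos hrank

theorem card_filter_not_forall_linearIndependent_sumElim_le {K V τ κ : Type*} {ι : τ → Type*}
    [DivisionRing K] [Fintype K] [AddCommGroup V] [Module K V] [Finite V] [Fintype τ]
    [∀ k, Fintype (ι k)] [Fintype κ] [DecidableEq κ]
    (v : (k : τ) → ι k → V) (hv : ∀ k, LinearIndependent K (v k)) (S : κ → Finset V) :
    #{w ∈ Fintype.piFinset S | ¬ ∀ k, LinearIndependent K (Sum.elim (v k) w)} ≤
      ∑ k, ∑ i, Fintype.card K ^ (Fintype.card (ι k) + (Fintype.card κ - 1)) *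
        ∏ j ∈ univ.erase i, #(S j) := by
  calc _ ≤ #(univ.biUnion fun k => univ.biUnion fun i => {w ∈ Fintype.piFinset S |
          w i ∈ Submodule.span K (Set.range (v k) ∪ w '' {i}ᶜ)}) := by
        refine card_le_card fun w hw => ?_
        obtain ⟨hwS, k, hk⟩ := by simpa only [mem_filter, not_forall] using hw
        obtain ⟨i, hi⟩ := (hv k).exists_mem_span_of_not_linearIndependent_sumElim hk
        simp only [mem_biUnion, mem_univ, mem_filter, true_and]
        exact ⟨k, i, hwS, hi⟩
    _ ≤ _ := card_biUnion_le.trans <| sum_le_sum fun k _ => card_biUnion_le.trans <|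
        sum_le_sum fun i _ => card_filter_piFinset_mem_span_le (v k) S i

theorem pow_mul_prod_erase_le_prod_div_rpow {κ : Type*} [Fintype κ] [DecidableEq κ]
    {q a b : ℝ} (hq : 1 ≤ q) {n : ℕ} (hn : n ≤ a) {x : κ → ℝ} (hx : ∀ j, q ^ b ≤ x j)
    (i : κ) : q ^ n * ∏ j ∈ univ.erase i, x j ≤ (∏ j, x j) / q ^ (b - a) := by
  have hq0 : 0 < q := by linarith
  have hprod : 0 ≤ ∏ j ∈ univ.erase i, x j :=
    prod_nonneg fun j _ => (Real.rpow_pos_of_pos hq0 b).le.trans (hx j)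
  rw [le_div_iff₀ (by positivity), Real.rpow_sub hq0, ← mul_prod_erase univ x (mem_univ i)]
  calc (q ^ n * ∏ j ∈ univ.erase i, x j) * (q ^ b / q ^ a)
      ≤ (q ^ a * ∏ j ∈ univ.erase i, x j) * (q ^ b / q ^ a) := by
        gcongr
        exact Real.rpow_natCast q n ▸ Real.rpow_le_rpow_of_exponent_le hq hn
    _ = q ^ b * ∏ j ∈ univ.erase i, x j := by field_simp
    _ ≤ x i * ∏ j ∈ univ.erase i, x j := by gcongr; exact hx i

theorem card_filter_not_forall_linearIndependent_sumElim_le_mul_div {K V τ κ : Type*}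
    {ι : τ → Type*} [DivisionRing K] [Fintype K] [AddCommGroup V] [Module K V] [Finite V]
    [Fintype τ] [∀ k, Fintype (ι k)] [Fintype κ] [DecidableEq κ]
    (v : (k : τ) → ι k → V) (hv : ∀ k, LinearIndependent K (v k)) (S : κ → Finset V)
    {a b : ℝ} (ha : ∀ k, (Fintype.card (ι k) : ℝ) + Fintype.card κ ≤ a)
    (hb : ∀ j, (Fintype.card K : ℝ) ^ b ≤ #(S j)) :
    (#{w ∈ Fintype.piFinset S | ¬ ∀ k, LinearIndependent K (Sum.elim (v k) w)} : ℝ) ≤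
      Fintype.card τ * Fintype.card κ * ((∏ j, (#(S j) : ℝ)) / Fintype.card K ^ (b - a)) := by
  have hq : (1 : ℝ) ≤ Fintype.card K := Nat.one_le_cast.mpr Fintype.card_pos
  refine ((Nat.cast_le (α := ℝ)).mpr
    (card_filter_not_forall_linearIndependent_sumElim_le v hv S)).trans ?_
  push_cast
  calc _ ≤ ∑ _k : τ, ∑ _i : κ, (∏ j, (#(S j) : ℝ)) / Fintype.card K ^ (b - a) := by
        gcongr with k _ i _
        refine pow_mul_prod_erase_le_prod_div_rpow hq ?_ hb i
        push_cast
        linarith [ha k, (Nat.cast_le (α := ℝ)).mpr (Nat.sub_le (Fintype.card κ) 1)]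
    _ = _ := by simp only [sum_const, card_univ, nsmul_eq_mul]; ring

theorem one_sub_le_card_filter_div_card {α : Type*} {s : Finset α} (hs : s.Nonempty)
    (p : α → Prop) [DecidablePred p] {ε : ℝ} (h : (#{x ∈ s | ¬ p x} : ℝ) ≤ ε * #s) :
    1 - ε ≤ #{x ∈ s | p x} / #s := by
  have hsplit : (#{x ∈ s | p x} : ℝ) + #{x ∈ s | ¬ p x} = #s := by
    exact_mod_cast card_filter_add_card_filter_not p
  rw [le_div_iff₀ (by exact_mod_cast hs.card_pos)]
  linarith

theorem stmt4_general {F : Type} [Field F] [Fintype F]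
    {d : ℕ} {γ : ℝ}
    {r t : ℕ} (ht1 : 1 ≤ t) (ht : (t : ℝ) ≤ γ ^ 2 * (d : ℝ) ^ 2)
    (s : Fin t → ℕ) (v : (k : Fin t) → Fin (s k) → (Fin d → F))
    (hv : ∀ k, LinearIndependent F (v k))
    (hs : ∀ k, (s k : ℝ) + (r : ℝ) ≤ γ * (d : ℝ))
    (S : Fin r → Finset (Fin d → F))
    (hS : ∀ i, (Fintype.card F : ℝ) ^ ((1 - γ) * (d : ℝ)) ≤ ((S i).card : ℝ)) :
    1 - γ ^ 3 * (d : ℝ) ^ 3 / (Fintype.card F : ℝ) ^ ((1 - 2 * γ) * (d : ℝ)) ≤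
      (((Fintype.piFinset S).filter fun w : Fin r → Fin d → F =>
          ∀ k, LinearIndependent F (Sum.elim (v k) w)).card : ℝ) /
        ∏ i, ((S i).card : ℝ) := by
  have hS₀ : ∀ i, (S i).Nonempty := fun i =>
    card_pos.mp (by exact_mod_cast (Real.rpow_pos_of_pos (by positivity) _).trans_le (hS i))
  have htr : (t : ℝ) * r ≤ γ ^ 3 * d ^ 3 := by
    have hr : (r : ℝ) ≤ γ * d := by linarith [hs ⟨0, ht1⟩, (s ⟨0, ht1⟩).cast_nonneg (α := ℝ)]
    calc (t : ℝ) * r ≤ γ ^ 2 * d ^ 2 * (γ * d) := mul_le_mul ht hr r.cast_nonneg (by positivity)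
      _ = γ ^ 3 * d ^ 3 := by ring
  have hbad := card_filter_not_forall_linearIndependent_sumElim_le_mul_div v hv S
    (by simpa only [Fintype.card_fin] using hs) hS
  rw [Fintype.card_fin, Fintype.card_fin, ← Nat.cast_prod, ← Fintype.card_piFinset,
    show (1 - γ) * (d : ℝ) - γ * d = (1 - 2 * γ) * d by ring] at hbad
  rw [← Nat.cast_prod, ← Fintype.card_piFinset]
  refine one_sub_le_card_filter_div_card (Fintype.piFinset_nonempty.mpr hS₀) _ ?_
  -- the two filters differ only in their `Decidable` instances
  refine (le_of_eq_of_le (by congr!) hbad).trans ?_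
  rw [mul_div_assoc', div_mul_eq_mul_div]
  gcongr

/-- If in each of `t ≤ γ²d²` groups the given vectors are linearly independent, and
`w₁, …, w_r` are independent uniform samples from large subsets `Sᵢ ⊆ F^d`, then with
probability at least `1 - γ³d³/|F|^{(1-2γ)d}` every group stays linearly independent after
adjoining all the `wᵢ`.  Probability is expressed as (favorable count)/(total count). -/
theorem stmt4 {F : Type} [Field F] [Fintype F]
    {d : ℕ} (hd : 1 ≤ d) {γ : ℝ} (hγ0 : 0 < γ) (hγ : γ < 1 / 2)
    {r t : ℕ} (hr : 1 ≤ r) (ht1 : 1 ≤ t) (ht : (t : ℝ) ≤ γ ^ 2 * (d : ℝ) ^ 2)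
    (s : Fin t → ℕ) (v : (k : Fin t) → Fin (s k) → (Fin d → F))
    (hv : ∀ k, LinearIndependent F (v k))
    (hs : ∀ k, (s k : ℝ) + (r : ℝ) ≤ γ * (d : ℝ))
    (S : Fin r → Finset (Fin d → F))
    (hS : ∀ i, (Fintype.card F : ℝ) ^ ((1 - γ) * (d : ℝ)) ≤ ((S i).card : ℝ)) :
    1 - γ ^ 3 * (d : ℝ) ^ 3 / (Fintype.card F : ℝ) ^ ((1 - 2 * γ) * (d : ℝ)) ≤
      (((Fintype.piFinset S).filter fun w : Fin r → Fin d → F =>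
          ∀ k, LinearIndependent F (Sum.elim (v k) w)).card : ℝ) /
        ∏ i, ((S i).card : ℝ) :=
  stmt4_general ht1 ht s v hv hs S hS
end

section
/- Let n, d be integers with d ≥ 2, let ε ∈ (0, d], and set m = ⌊εn/d⌋; assume m ≥ 1. If A ∈ ℝ^{n×n} with ‖A‖_∞ ≤ 1 is ε/d-far from stable rank at most d, then ‖A‖_F² > (d−1)·m·n; in particular ‖A‖_F² > εn²(1 − 1/d) − (d−1)n. -/
open Matrix Finset
open scoped Classical

/-- The squared Frobenius norm `‖A‖_F²` of a real matrix. -/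
noncomputable def frobSq {n : ℕ} (A : Matrix (Fin n) (Fin n) ℝ) : ℝ :=
  ∑ i, ∑ j, (A i j) ^ 2

/-- The operator norm (largest singular value) of a real matrix, viewed as a linear map
`ℓ²ⁿ → ℓ²ⁿ`. -/
noncomputable def opNorm {n : ℕ} (A : Matrix (Fin n) (Fin n) ℝ) : ℝ :=
  ‖LinearMap.toContinuousLinearMap (Matrix.toEuclideanLin A)‖

/-- The stable rank `srank(A) = ‖A‖_F²/‖A‖²`. -/
noncomputable def stableRank {n : ℕ} (A : Matrix (Fin n) (Fin n) ℝ) : ℝ :=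
  frobSq A / (opNorm A) ^ 2

/-!
If `‖A‖_F²` were at most `(d - 1) m n`, overwrite `m` rows of `A` with ones to get `B`. This changes at most
`m n ≤ εn²/d` entries, adds at most `m n` to the squared Frobenius norm, and forces
`‖B‖² ≥ ‖B 𝟙‖² / ‖𝟙‖² ≥ m n`; hence `srank B ≤ (m n + (d - 1) m n) / (m n) = d`, contradicting
farness. The second bound is the first one with `m > εn/d - 1`.
-/

namespace StableRankFar

variable {n : ℕ}

lemma frobSq_nonneg (A : Matrix (Fin n) (Fin n) ℝ) : 0 ≤ frobSq A := by
  unfold frobSq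
  positivity

lemma sum_sq_mulVec_le_opNorm_sq_mul (B : Matrix (Fin n) (Fin n) ℝ) (v : Fin n → ℝ) :
    ∑ i, (B *ᵥ v) i ^ 2 ≤ opNorm B ^ 2 * ∑ i, v i ^ 2 := by
  have h := (LinearMap.toContinuousLinearMap (toEuclideanLin B)).le_opNorm (WithLp.toLp 2 v)
  have h2 := pow_le_pow_left₀ (norm_nonneg _) h 2
  rwa [mul_pow, EuclideanSpace.real_norm_sq_eq, EuclideanSpace.real_norm_sq_eq] at h2

def fillRowsOne (A : Matrix (Fin n) (Fin n) ℝ) (S : Finset (Fin n)) : Matrix (Fin n) (Fin n) ℝ :=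
  fun i j => if i ∈ S then 1 else A i j

variable (A : Matrix (Fin n) (Fin n) ℝ) (S : Finset (Fin n))

lemma fillRowsOne_ne_zero (hS : S.Nonempty) : fillRowsOne A S ≠ 0 := by
  obtain ⟨i, hi⟩ := hS
  intro h
  simpa [fillRowsOne, hi] using congr_fun (congr_fun h i) i

lemma abs_fillRowsOne_le_one (hA : ∀ i j, |A i j| ≤ 1) (i j : Fin n) :
    |fillRowsOne A S i j| ≤ 1 := by
  unfold fillRowsOne
  split_ifs
  · simp
  · exact hA i j

lemma card_ne_fillRowsOne_le :
    #(univ.filter fun p : Fin n × Fin n => A p.1 p.2 ≠ fillRowsOne A S p.1 p.2) ≤ #S * n := by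
  calc #(univ.filter fun p : Fin n × Fin n => A p.1 p.2 ≠ fillRowsOne A S p.1 p.2)
      ≤ #(S ×ˢ (univ : Finset (Fin n))) := by
        refine card_le_card fun p hp => ?_
        by_contra hpS
        simp_all [fillRowsOne]
    _ = #S * n := by simp

lemma frobSq_fillRowsOne_le : frobSq (fillRowsOne A S) ≤ #S * n + frobSq A := by
  have hentry : ∀ i j, fillRowsOne A S i j ^ 2 ≤ (if i ∈ S then 1 else 0) + A i j ^ 2 := by
    intro i j
    unfold fillRowsOne
    split_ifs <;> nlinarith [sq_nonneg (A i j)]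
  calc frobSq (fillRowsOne A S)
      ≤ ∑ i, ∑ j : Fin n, ((if i ∈ S then (1 : ℝ) else 0) + A i j ^ 2) :=
        sum_le_sum fun i _ => sum_le_sum fun j _ => hentry i j
    _ = #S * n + frobSq A := by simp [frobSq, sum_add_distrib]

lemma card_mul_le_opNorm_fillRowsOne_sq : (#S * n : ℝ) ≤ opNorm (fillRowsOne A S) ^ 2 := by
  rcases Nat.eq_zero_or_pos n with rfl | hn
  · simpa using sq_nonneg (opNorm (fillRowsOne A S))
  have hrow : ∀ i ∈ S, (fillRowsOne A S *ᵥ fun _ => 1) i = n := by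
    intro i hi
    simp [fillRowsOne, mulVec, dotProduct, hi]
  have hsum : (#S * n : ℝ) * n ≤ ∑ i, (fillRowsOne A S *ᵥ fun _ => 1) i ^ 2 :=
    calc (#S * n : ℝ) * n = ∑ i ∈ S, (fillRowsOne A S *ᵥ fun _ => 1) i ^ 2 := by
          rw [sum_congr rfl fun i hi => by rw [hrow i hi]]
          simp [sq, mul_assoc]
      _ ≤ ∑ i, (fillRowsOne A S *ᵥ fun _ => 1) i ^ 2 :=
          sum_le_sum_of_subset_of_nonneg (subset_univ S) fun _ _ _ => sq_nonneg _
  have hop := sum_sq_mulVec_le_opNorm_sq_mul (fillRowsOne A S) fun _ => 1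
  simp only [one_pow, sum_const, card_univ, Fintype.card_fin, nsmul_eq_mul, mul_one] at hop
  exact le_of_mul_le_mul_right (hsum.trans hop) (by exact_mod_cast hn)

lemma stableRank_fillRowsOne_le (hS : S.Nonempty) :
    stableRank (fillRowsOne A S) ≤ 1 + frobSq A / (#S * n) := by
  have hpos : (0 : ℝ) < #S * n := by
    obtain ⟨i, hi⟩ := hS
    have : 0 < n := Fin.pos i
    have : 0 < #S := card_pos.mpr ⟨i, hi⟩
    positivity
  calc stableRank (fillRowsOne A S)
      ≤ frobSq (fillRowsOne A S) / (#S * n) :=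
        div_le_div_of_nonneg_left (frobSq_nonneg _) hpos (card_mul_le_opNorm_fillRowsOne_sq A S)
    _ ≤ (#S * n + frobSq A) / (#S * n) :=
        div_le_div_of_nonneg_right (frobSq_fillRowsOne_le A S) hpos.le
    _ = 1 + frobSq A / (#S * n) := by
        rw [add_div, div_self hpos.ne']

theorem mul_lt_frobSq_of_forall_lt_stableRank (hA : ∀ i j, |A i j| ≤ 1) {m : ℕ} (hm : 0 < m)
    (hmn : m ≤ n) {r budget : ℝ} (hbudget : (m * n : ℝ) ≤ budget)
    (hfar : ∀ B : Matrix (Fin n) (Fin n) ℝ, B ≠ 0 → (∀ i j, |B i j| ≤ 1) →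
      (#(univ.filter fun p : Fin n × Fin n => A p.1 p.2 ≠ B p.1 p.2) : ℝ) ≤ budget →
      r < stableRank B) :
    (r - 1) * m * n < frobSq A := by
  obtain ⟨S, -, hSm⟩ := exists_subset_card_eq (s := (univ : Finset (Fin n))) (by simpa using hmn)
  have hS : S.Nonempty := card_pos.mp (hSm ▸ hm)
  have hchanged : (#(univ.filter fun p : Fin n × Fin n =>
      A p.1 p.2 ≠ fillRowsOne A S p.1 p.2) : ℝ) ≤ budget := by
    refine le_trans ?_ hbudget
    exact_mod_cast hSm ▸ card_ne_fillRowsOne_le A S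
  have hr := hfar _ (fillRowsOne_ne_zero A S hS) (abs_fillRowsOne_le_one A S hA) hchanged
  have hsr := stableRank_fillRowsOne_le A S hS
  rw [hSm] at hsr
  have hpos : (0 : ℝ) < m * n := by
    have : 0 < n := hm.trans_le hmn
    positivity
  calc (r - 1) * m * n = (r - 1) * (m * n) := mul_assoc _ _ _
    _ < frobSq A := (lt_div_iff₀ hpos).mp (by linarith)

end StableRankFar

open StableRankFar

theorem stmt9 {n d : ℕ} (hd : 2 ≤ d) {ε : ℝ} (hε0 : 0 < ε) (hεd : ε ≤ (d : ℝ))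
    (hm : 1 ≤ ⌊ε * (n : ℝ) / (d : ℝ)⌋₊)
    (A : Matrix (Fin n) (Fin n) ℝ) (hAinf : ∀ i j, |A i j| ≤ 1)
    (hfar : ∀ B : Matrix (Fin n) (Fin n) ℝ, B ≠ 0 → (∀ i j, |B i j| ≤ 1) →
      ((Finset.univ.filter fun p : Fin n × Fin n => A p.1 p.2 ≠ B p.1 p.2).card : ℝ)
        ≤ ε * (n : ℝ) ^ 2 / (d : ℝ) →
      (d : ℝ) < stableRank B) :
    ((d : ℝ) - 1) * (⌊ε * (n : ℝ) / (d : ℝ)⌋₊ : ℝ) * (n : ℝ) < frobSq A ∧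
      ε * (n : ℝ) ^ 2 * (1 - 1 / (d : ℝ)) - ((d : ℝ) - 1) * (n : ℝ) < frobSq A := by
  set m := ⌊ε * (n : ℝ) / (d : ℝ)⌋₊
  have hd0 : (0 : ℝ) < d := by exact_mod_cast (by omega : 0 < d)
  have hmx : (m : ℝ) ≤ ε * n / d := Nat.floor_le (by positivity)
  have hmn : m ≤ n := Nat.floor_le_of_le <| div_le_of_le_mul₀ hd0.le (Nat.cast_nonneg n) <|
    by nlinarith [Nat.cast_nonneg (α := ℝ) n]
  have hbudget : (m * n : ℝ) ≤ ε * n ^ 2 / d :=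
    calc (m * n : ℝ) ≤ ε * n / d * n := by gcongr
      _ = ε * n ^ 2 / d := by ring
  have key := mul_lt_frobSq_of_forall_lt_stableRank A hAinf hm hmn hbudget hfar
  refine ⟨key, lt_of_le_of_lt ?_ key⟩
  have hfloor : ε * n / d - 1 ≤ m := (Nat.sub_one_lt_floor _).le
  have hd1 : (0 : ℝ) ≤ d - 1 := by
    have : (2 : ℝ) ≤ d := by exact_mod_cast hd
    linarith
  calc ε * (n : ℝ) ^ 2 * (1 - 1 / d) - (d - 1) * n = (d - 1) * (ε * n / d - 1) * n := by
        field_simp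
    _ ≤ (d - 1) * m * n := by gcongr
end

section
/- Let A ∈ ℝ^{n×n} be nonzero with singular values σ₁ ≥ σ₂ ≥ ⋯ ≥ σ_n, let τ ∈ (0,1), γ > 0, and d ≥ 1 be real numbers such that σ₂ ≤ τ^γ σ₁ and ‖A‖_F² ≤ d σ₁² (i.e., the stable rank of A is at most d). If q is an integer with q ≥ 1 + (1/(2γ)) · (1 + ln d / ln(1/τ)), then σ₁^{2q} ≤ ∑_{i=1}^n σ_i^{2q} ≤ (1+τ) σ₁^{2q}; that is, ‖A‖_{S_{2q}}^{2q} approximates ‖A‖^{2q} to within a (1+τ) factor. -/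
open Matrix Finset
open scoped Classical

/-- The singular values of a real square matrix: square roots of the eigenvalues of `AᴴA`. -/
noncomputable def singVals {n : ℕ} (A : Matrix (Fin n) (Fin n) ℝ) : Fin n → ℝ :=
  fun i => Real.sqrt ((show (Aᵀ * A).IsHermitian by simpa using Matrix.isHermitian_conjTranspose_mul_self A).eigenvalues i)

/-!
Split off the top singular value. Every other `σᵢ` is at most `τ^γ σ₁`, so
`σᵢ^{2q} ≤ (τ^γ σ₁)^{2q-2} σᵢ²`, and summing with the stable-rank bound `∑ σᵢ² ≤ d σ₁²` gives
`∑ σᵢ^{2q} ≤ (1 + d τ^{γ(2q-2)}) σ₁^{2q}`. The lower bound on `q` is exactly what makes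
`d τ^{γ(2q-2)} ≤ τ`, as one sees after taking logarithms.
-/

lemma singVals_nonneg {n : ℕ} (A : Matrix (Fin n) (Fin n) ℝ) (i : Fin n) : 0 ≤ singVals A i :=
  Real.sqrt_nonneg _

lemma sum_pow_add_two_le_of_le_mul {ι : Type*} [Fintype ι] {s : ι → ℝ} (hs : ∀ i, 0 ≤ s i)
    (i₀ : ι) {c d : ℝ} (hc : 0 ≤ c) (htail : ∀ i ≠ i₀, s i ≤ c * s i₀)
    (hsq : ∑ i, s i ^ 2 ≤ d * s i₀ ^ 2) (m : ℕ) :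
    ∑ i, s i ^ (m + 2) ≤ (1 + d * c ^ m) * s i₀ ^ (m + 2) := by
  have hterm : ∀ i ∈ univ.erase i₀, s i ^ (m + 2) ≤ (c * s i₀) ^ m * s i ^ 2 := fun i hi => by
    rw [pow_add]
    gcongr
    · exact hs i
    · exact htail i (ne_of_mem_erase hi)
  have hrest : ∑ i ∈ univ.erase i₀, s i ^ 2 ≤ d * s i₀ ^ 2 :=
    (sum_le_sum_of_subset_of_nonneg (erase_subset _ _) fun i _ _ => sq_nonneg (s i)).trans hsq
  have hbase : 0 ≤ (c * s i₀) ^ m := pow_nonneg (mul_nonneg hc (hs i₀)) m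
  calc ∑ i, s i ^ (m + 2) = s i₀ ^ (m + 2) + ∑ i ∈ univ.erase i₀, s i ^ (m + 2) :=
        (add_sum_erase _ _ (mem_univ _)).symm
    _ ≤ s i₀ ^ (m + 2) + (c * s i₀) ^ m * ∑ i ∈ univ.erase i₀, s i ^ 2 := by
        rw [mul_sum]; gcongr with i hi; exact hterm i hi
    _ ≤ s i₀ ^ (m + 2) + (c * s i₀) ^ m * (d * s i₀ ^ 2) := by gcongr
    _ = (1 + d * c ^ m) * s i₀ ^ (m + 2) := by ring

lemma one_le_of_one_add_div_log_le {τ γ d q : ℝ} (hτ0 : 0 < τ) (hτ1 : τ < 1) (hγ : 0 < γ)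
    (hd : 1 ≤ d) (hq : 1 + 1 / (2 * γ) * (1 + Real.log d / Real.log (1 / τ)) ≤ q) : 1 ≤ q := by
  have hL : 0 < Real.log (1 / τ) := Real.log_pos (one_lt_one_div hτ0 hτ1)
  have : 0 ≤ 1 / (2 * γ) * (1 + Real.log d / Real.log (1 / τ)) := by
    have := div_nonneg (Real.log_nonneg hd) hL.le
    positivity
  linarith

lemma mul_rpow_le_self_of_one_add_div_log_le {τ γ d q : ℝ} (hτ0 : 0 < τ) (hτ1 : τ < 1)
    (hγ : 0 < γ) (hd : 0 < d)
    (hq : 1 + 1 / (2 * γ) * (1 + Real.log d / Real.log (1 / τ)) ≤ q) :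
    d * τ ^ (γ * (2 * q - 2)) ≤ τ := by
  have hL : 0 < Real.log (1 / τ) := Real.log_pos (one_lt_one_div hτ0 hτ1)
  have hlog : Real.log d + Real.log (1 / τ) ≤ γ * (2 * q - 2) * Real.log (1 / τ) := by
    have := mul_le_mul_of_nonneg_right (sub_le_sub_right hq 1) (by positivity : 0 ≤ 2 * γ * Real.log (1 / τ))
    field_simp at this
    linarith
  rw [one_div, Real.log_inv] at hlog
  calc d * τ ^ (γ * (2 * q - 2))
      = Real.exp (Real.log d + γ * (2 * q - 2) * Real.log τ) := by
        rw [Real.exp_add, Real.exp_log hd, Real.rpow_def_of_pos hτ0, mul_comm (Real.log τ)]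
    _ ≤ Real.exp (Real.log τ) := Real.exp_le_exp.mpr (by linarith)
    _ = τ := Real.exp_log hτ0

/-- Under a singular value gap `σ₂ ≤ τ^γ σ₁` and stable rank at most `d`, for
`q ≥ 1 + (1/(2γ))(1 + ln d / ln(1/τ))` the Schatten-`2q` norm approximates the operator norm:
`σ₁^{2q} ≤ ∑ σᵢ^{2q} ≤ (1+τ) σ₁^{2q}`.  Here `s` is the nonincreasing rearrangement of the
singular values of `A`. -/
theorem stmt14 {n : ℕ} (hn : 2 ≤ n) (A : Matrix (Fin n) (Fin n) ℝ)
    (s : Fin n → ℝ) (hs : Antitone s)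
    (hperm : ∃ e : Equiv.Perm (Fin n), ∀ i, s i = singVals A (e i))
    (τ γ d : ℝ) (hτ0 : 0 < τ) (hτ1 : τ < 1) (hγ : 0 < γ) (hd : 1 ≤ d)
    (hgap : s ⟨1, by omega⟩ ≤ τ ^ γ * s ⟨0, by omega⟩)
    (hsr : ∑ i, (s i) ^ 2 ≤ d * (s ⟨0, by omega⟩) ^ 2)
    (q : ℕ) (hq : 1 + 1 / (2 * γ) * (1 + Real.log d / Real.log (1 / τ)) ≤ (q : ℝ)) :
    (s ⟨0, by omega⟩) ^ (2 * q) ≤ ∑ i, (s i) ^ (2 * q) ∧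
      ∑ i, (s i) ^ (2 * q) ≤ (1 + τ) * (s ⟨0, by omega⟩) ^ (2 * q) := by
  obtain ⟨e, he⟩ := hperm
  have hs0 : ∀ i, 0 ≤ s i := fun i => he i ▸ singVals_nonneg A (e i)
  have hq1 : 1 ≤ q := by exact_mod_cast one_le_of_one_add_div_log_le hτ0 hτ1 hγ hd hq
  have htail : ∀ i ≠ ⟨0, by omega⟩, s i ≤ τ ^ γ * s ⟨0, by omega⟩ := fun i hi =>
    (hs (Fin.mk_le_of_le_val (by simp only [ne_eq, Fin.ext_iff] at hi; omega))).trans hgap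
  have hkey : d * (τ ^ γ) ^ (2 * q - 2) ≤ τ := by
    rw [← Real.rpow_natCast, ← Real.rpow_mul hτ0.le, Nat.cast_sub (by omega)]
    push_cast
    exact mul_rpow_le_self_of_one_add_div_log_le hτ0 hτ1 hγ (by linarith) hq
  refine ⟨single_le_sum (fun i _ => pow_nonneg (hs0 i) _) (mem_univ _), ?_⟩
  rw [show 2 * q = 2 * q - 2 + 2 by omega]
  calc ∑ i, s i ^ (2 * q - 2 + 2)
      ≤ (1 + d * (τ ^ γ) ^ (2 * q - 2)) * s ⟨0, by omega⟩ ^ (2 * q - 2 + 2) :=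
        sum_pow_add_two_le_of_le_mul hs0 _ (by positivity) htail hsr _
    _ ≤ (1 + τ) * s ⟨0, by omega⟩ ^ (2 * q - 2 + 2) := by
        gcongr
        exact pow_nonneg (hs0 _) _
end

section
/- Let F be a field, let m, k be positive integers, let A ∈ F^{m×k}, and let R₁ ⊇ R₂ ⊇ ⋯ ⊇ R_k be subsets of {1,…,m}. Call B ∈ F^{m×k} a completion of A if B_{i,j} = A_{i,j} for every j ∈ {1,…,k} and every i ∈ R_j. Then the minimum of rank(B) over all completions B equals the number of indices j ∈ {1,…,k} for which the restricted column (A_{i,j})_{i ∈ R_j} is not contained in the span of the restricted earlier columns {(A_{i,j'})_{i ∈ R_j} : 1 ≤ j' < j}. -/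
/-!
Call column `j` a pivot when its observed part `A|_{R j}` is not in the span of the restrictions
to `R j` of the earlier columns. On `R j` every completion agrees with `A` in all columns
`j' ≤ j`, because `R j ⊆ R j'`; so a pivot column of a completion is not in the span of its
earlier columns, the pivot columns are linearly independent, and the rank is at least the number
of pivots. Conversely, fill in the columns from left to right: copy a pivot column from `A`, and
write a non-pivot column as the combination of the already completed earlier columns whose
restriction to `R j` gives the observed part. This is a completion in which every column lies in
the span of the pivot columns.
-/

open Matrix Finset Submodule
open scoped Classical

section LinearIndependence

variable {K ι V : Type*} [DivisionRing K] [AddCommGroup V] [Module K V] [LinearOrder ι]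

theorem linearIndepOn_of_notMem_span_image_Iio {f : ι → V} (s : Finset ι)
    (h : ∀ j ∈ s, f j ∉ span K (f '' Set.Iio j)) : LinearIndepOn K f s := by
  induction s using Finset.induction_on_max with
  | empty => simp
  | insert a s hlt ih =>
    rw [Finset.coe_insert, linearIndepOn_insert fun ha => (hlt a ha).false]
    refine ⟨ih fun j hj => h j (Finset.mem_insert_of_mem hj), fun ha => ?_⟩
    exact h a (Finset.mem_insert_self a s) (span_mono (Set.image_mono hlt) ha)

end LinearIndependence

namespace Staircase

variable {F ρ : Type*} {k : ℕ} (A : Matrix ρ (Fin k) F) (R : Fin k → Finset ρ)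

def restrictCol (s : Finset ρ) (j : Fin k) : s → F := fun i => A i.1 j

def IsCompletion (B : Matrix ρ (Fin k) F) : Prop := ∀ j, ∀ i ∈ R j, B i j = A i j

variable {A R}

theorem IsCompletion.restrictCol_eq {B : Matrix ρ (Fin k) F}
    (hR : ∀ j j' : Fin k, j ≤ j' → R j' ⊆ R j) (hB : IsCompletion A R B) {j j' : Fin k}
    (hle : j' ≤ j) : restrictCol B (R j) j' = restrictCol A (R j) j' :=
  funext fun i => hB j' i (hR j' j hle i.2)

variable [Field F]

variable (A R) in
noncomputable def pivots : Finset (Fin k) :=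
  Finset.univ.filter fun j => restrictCol A (R j) j ∉ span F (restrictCol A (R j) '' Set.Iio j)

theorem exists_sum_eq_restrictCol_of_notMem_pivots {j : Fin k} (hj : j ∉ pivots A R) :
    ∃ c : Set.Iio j → F, ∑ j', c j' • restrictCol A (R j) j' = restrictCol A (R j) j := by
  have hmem : restrictCol A (R j) j ∈ span F (restrictCol A (R j) '' Set.Iio j) := by
    simpa [pivots] using hj
  rwa [Set.image_eq_range, mem_span_range_iff_exists_fun] at hmem

section LowerBound

variable {B : Matrix ρ (Fin k) F} (hR : ∀ j j' : Fin k, j ≤ j' → R j' ⊆ R j)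
include hR

theorem IsCompletion.col_notMem_span_of_mem_pivots (hB : IsCompletion A R B) {j : Fin k}
    (hj : j ∈ pivots A R) : B.col j ∉ span F (B.col '' Set.Iio j) := by
  intro hmem
  have hres := apply_mem_span_image_of_mem_span (LinearMap.funLeft F F ((↑) : R j → ρ)) hmem
  rw [Set.image_image] at hres
  have himage : restrictCol A (R j) '' Set.Iio j = restrictCol B (R j) '' Set.Iio j :=
    Set.image_congr fun j' hj' => (hB.restrictCol_eq hR (le_of_lt hj')).symm
  refine (Finset.mem_filter.1 hj).2 ?_
  rw [← hB.restrictCol_eq hR le_rfl, himage]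
  exact hres

theorem IsCompletion.card_pivots_le_rank (hB : IsCompletion A R B) :
    (pivots A R).card ≤ B.rank := by
  have hind := (linearIndepOn_of_notMem_span_image_Iio (pivots A R) fun j hj =>
    hB.col_notMem_span_of_mem_pivots hR hj).linearIndependent
  have := Module.Finite.span_of_finite F (Set.finite_range B.col)
  calc (pivots A R).card
      = Module.finrank F (span F (Set.range fun j : (pivots A R : Set (Fin k)) => B.col j)) := by
        rw [finrank_span_eq_card hind]
        simp
    _ ≤ Module.finrank F (span F (Set.range B.col)) :=
        finrank_mono (span_mono (Set.range_comp_subset_range _ _))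
    _ = B.rank := B.rank_eq_finrank_span_cols.symm

end LowerBound

variable (A R) in
noncomputable def completionCol (j : Fin k) : ρ → F :=
  if hj : j ∈ pivots A R then A.col j
  else
    ∑ j' : Set.Iio j, (exists_sum_eq_restrictCol_of_notMem_pivots hj).choose j' • completionCol j'
termination_by j.val
decreasing_by exact j'.2

variable (A R) in
noncomputable def completion : Matrix ρ (Fin k) F := Matrix.of fun i j => completionCol A R j i

theorem isCompletion_completion (hR : ∀ j j' : Fin k, j ≤ j' → R j' ⊆ R j) :
    IsCompletion A R (completion A R) := by
  intro j
  induction j using WellFoundedLT.induction with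
  | ind j ih =>
    intro i hi
    show completionCol A R j i = A i j
    rw [completionCol]
    split_ifs with hj
    · rfl
    set c := (exists_sum_eq_restrictCol_of_notMem_pivots hj).choose
    have hc : ∑ j', c j' • restrictCol A (R j) j' = restrictCol A (R j) j :=
      (exists_sum_eq_restrictCol_of_notMem_pivots hj).choose_spec
    calc (∑ j' : Set.Iio j, c j' • completionCol A R j') i
        = (∑ j' : Set.Iio j, c j' • restrictCol A (R j) j') ⟨i, hi⟩ := by
          simp only [Finset.sum_apply, Pi.smul_apply, smul_eq_mul]
          refine Finset.sum_congr rfl fun j' _ => ?_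
          exact congrArg (c j' * ·) (ih j' j'.2 i (hR j' j (le_of_lt j'.2) hi))
      _ = A i j := congrFun hc ⟨i, hi⟩

theorem completionCol_mem_span_pivots (j : Fin k) :
    completionCol A R j ∈ span F (completionCol A R '' pivots A R) := by
  induction j using WellFoundedLT.induction with
  | ind j ih =>
    by_cases hj : j ∈ pivots A R
    · exact subset_span (Set.mem_image_of_mem _ hj)
    rw [completionCol, dif_neg hj]
    exact sum_mem fun j' _ => smul_mem _ _ (ih j' j'.2)

theorem rank_completion_le : (completion A R).rank ≤ (pivots A R).card := by
  let pivotCol := fun j : (pivots A R : Set (Fin k)) => completionCol A R j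
  have hspan : span F (Set.range (completion A R).col) ≤ span F (Set.range pivotCol) := by
    rw [span_le, Set.range_subset_iff]
    intro j
    have hj := completionCol_mem_span_pivots (A := A) (R := R) j
    rwa [Set.image_eq_range] at hj
  have := Module.Finite.span_of_finite F (Set.finite_range pivotCol)
  calc (completion A R).rank
      = Module.finrank F (span F (Set.range (completion A R).col)) :=
        rank_eq_finrank_span_cols _
    _ ≤ Module.finrank F (span F (Set.range pivotCol)) := finrank_mono hspan
    _ ≤ Fintype.card (pivots A R : Set (Fin k)) := finrank_range_le_card _
    _ = (pivots A R).card := by simp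

end Staircase

theorem stmt15_general {F : Type} [Field F] {m k : ℕ}
    (A : Matrix (Fin m) (Fin k) F) (R : Fin k → Finset (Fin m))
    (hR : ∀ j j' : Fin k, j ≤ j' → R j' ⊆ R j) :
    sInf {r : ℕ | ∃ B : Matrix (Fin m) (Fin k) F,
        (∀ j : Fin k, ∀ i ∈ R j, B i j = A i j) ∧ B.rank = r}
      = (Finset.univ.filter fun j : Fin k =>
          (fun i : {x // x ∈ R j} => A i.1 j) ∉
            Submodule.span F
              ((fun j' : Fin k => (fun i : {x // x ∈ R j} => A i.1 j')) ''
                {j' : Fin k | j' < j})).card := by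
  have hcompletion := Staircase.isCompletion_completion (A := A) hR
  refine IsLeast.csInf_eq ⟨⟨Staircase.completion A R, hcompletion, ?_⟩, ?_⟩
  · exact le_antisymm Staircase.rank_completion_le (hcompletion.card_pivots_le_rank hR)
  · rintro r ⟨B, hB, rfl⟩
    exact Staircase.IsCompletion.card_pivots_le_rank hR hB

/-- Minimum-rank completion for a staircase observation pattern: with nested observed row sets
`R₁ ⊇ R₂ ⊇ ⋯ ⊇ R_k`, the minimum rank of a matrix agreeing with `A` on the observed entries
equals the number of columns `j` whose observed part is not in the span of the observed parts
of the earlier columns. -/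
theorem stmt15 {F : Type} [Field F] {m k : ℕ} (hm : 0 < m) (hk : 0 < k)
    (A : Matrix (Fin m) (Fin k) F) (R : Fin k → Finset (Fin m))
    (hR : ∀ j j' : Fin k, j ≤ j' → R j' ⊆ R j) :
    sInf {r : ℕ | ∃ B : Matrix (Fin m) (Fin k) F,
        (∀ j : Fin k, ∀ i ∈ R j, B i j = A i j) ∧ B.rank = r}
      = (Finset.univ.filter fun j : Fin k =>
          (fun i : {x // x ∈ R j} => A i.1 j) ∉
            Submodule.span F
              ((fun j' : Fin k => (fun i : {x // x ∈ R j} => A i.1 j')) ''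
                {j' : Fin k | j' < j})).card :=
  stmt15_general A R hR
end

section
/- Let A ∈ ℝ^{n×n} be nonzero with ‖A‖_∞ ≤ 1, and let θ ∈ (0, 1/2). Then there exist vectors u, v ∈ ℝⁿ with ‖u‖₂ ≤ 1 and ‖v‖₂ ≤ 1, such that every nonzero coordinate of u and of v has absolute value at least θ/√n, and ⟨Au, v⟩ ≥ (1 − 2θ)‖A‖. Consequently ‖u‖₁ · ‖v‖₁ ≥ (1 − 2θ)‖A‖, and hence at least one of ‖u‖₁, ‖v‖₁ is at least √((1 − 2θ)‖A‖). -/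
/-!
Take `x` in the unit ball on which `A` attains its norm, let `u` be `x` with its coordinates of
size below `t = θ/√n` zeroed out, and take `w` in the unit ball with `⟨Au, w⟩ = ‖Au‖`. Zeroing out
such coordinates moves a vector by at most `√n · t = θ` in `ℓ²`, so `‖Au‖ ≥ (1 - θ)‖A‖`, and the
truncation `v` of `w` gives `⟨Au, v⟩ ≥ (1 - θ)‖Au‖ ≥ (1 - θ)²‖A‖ ≥ (1 - 2θ)‖A‖`. Since the
entries of `A` are bounded by `1`, `⟨Au, v⟩ ≤ ‖u‖₁‖v‖₁`.
-/

open Matrix Finset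
open scoped Classical
open scoped RealInnerProductSpace

theorem ContinuousLinearMap.exists_norm_le_one_norm_apply_eq {𝕜 E F : Type*}
    [DenselyNormedField 𝕜] [NormedAddCommGroup E] [NormedSpace 𝕜 E] [ProperSpace E]
    [SeminormedAddCommGroup F] [NormedSpace 𝕜 F] (f : E →L[𝕜] F) :
    ∃ x, ‖x‖ ≤ 1 ∧ ‖f x‖ = ‖f‖ := by
  obtain ⟨x, hx, hfx⟩ := ((isCompact_closedBall (0 : E) 1).image (by fun_prop)).sSup_mem
    ((Metric.nonempty_closedBall.2 zero_le_one).image fun x => ‖f x‖)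
  exact ⟨x, mem_closedBall_zero_iff.1 hx, hfx.trans f.sSup_unitClosedBall_eq_norm⟩

theorem exists_norm_le_one_inner_eq_norm {E : Type*} [NormedAddCommGroup E]
    [InnerProductSpace ℝ E] (y : E) : ∃ w : E, ‖w‖ ≤ 1 ∧ ⟪y, w⟫ = ‖y‖ := by
  refine ⟨‖y‖⁻¹ • y, ?_, ?_⟩
  · rw [norm_smul, norm_inv, norm_norm]
    exact inv_mul_le_one
  · rw [real_inner_smul_right, real_inner_self_eq_norm_sq]
    rcases eq_or_ne ‖y‖ 0 with hy | hy
    · simp [hy]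
    · field_simp

theorem ContinuousLinearMap.one_sub_mul_norm_le_norm_apply {E F : Type*}
    [SeminormedAddCommGroup E] [NormedSpace ℝ E] [SeminormedAddCommGroup F] [NormedSpace ℝ F]
    {f : E →L[ℝ] F} {x u : E} {θ : ℝ} (hx : ‖f x‖ = ‖f‖) (hxu : ‖x - u‖ ≤ θ) :
    (1 - θ) * ‖f‖ ≤ ‖f u‖ := by
  have : ‖f (x - u)‖ ≤ ‖f‖ * θ := (f.le_opNorm _).trans (by gcongr)
  rw [map_sub] at this
  linarith [norm_sub_norm_le (f x) (f u)]

theorem one_sub_mul_norm_le_inner {E : Type*} [NormedAddCommGroup E] [InnerProductSpace ℝ E]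
    {y w v : E} {θ : ℝ} (hyw : ⟪y, w⟫ = ‖y‖) (hwv : ‖w - v‖ ≤ θ) :
    (1 - θ) * ‖y‖ ≤ ⟪y, v⟫ := by
  have : ⟪y, w - v⟫ ≤ ‖y‖ * θ := (real_inner_le_norm _ _).trans (by gcongr)
  rw [inner_sub_right, hyw] at this
  linarith

section Truncation

variable {ι : Type*}

noncomputable def truncBelow (t : ℝ) (w : EuclideanSpace ℝ ι) : EuclideanSpace ℝ ι :=
  WithLp.toLp 2 fun i => if |w i| < t then 0 else w i

theorem truncBelow_apply (t : ℝ) (w : EuclideanSpace ℝ ι) (i : ι) :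
    truncBelow t w i = if |w i| < t then 0 else w i :=
  rfl

theorem le_abs_truncBelow_of_ne_zero {t : ℝ} {w : EuclideanSpace ℝ ι} {i : ι}
    (h : truncBelow t w i ≠ 0) : t ≤ |truncBelow t w i| := by
  rw [truncBelow_apply] at h ⊢
  split_ifs at h ⊢ with hw
  · exact absurd rfl h
  · exact not_lt.1 hw

theorem norm_truncBelow_le [Fintype ι] (t : ℝ) (w : EuclideanSpace ℝ ι) :
    ‖truncBelow t w‖ ≤ ‖w‖ := by
  refine pow_le_pow_iff_left₀ (norm_nonneg _) (norm_nonneg _) two_ne_zero |>.1 ?_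
  simp only [EuclideanSpace.real_norm_sq_eq]
  refine sum_le_sum fun i _ => ?_
  rw [truncBelow_apply]
  split_ifs <;> simp [sq_nonneg]

theorem norm_sub_truncBelow_le [Fintype ι] {t : ℝ} (ht : 0 ≤ t) (w : EuclideanSpace ℝ ι) :
    ‖w - truncBelow t w‖ ≤ √(Fintype.card ι) * t := by
  have hcoord : ∀ i, (w - truncBelow t w) i ^ 2 ≤ t ^ 2 := fun i => by
    rw [PiLp.sub_apply, truncBelow_apply]
    split_ifs with hw
    · rw [sub_zero, ← sq_abs]
      exact pow_le_pow_left₀ (abs_nonneg _) hw.le 2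
    · simp [sq_nonneg]
  calc ‖w - truncBelow t w‖ = √(∑ i, (w - truncBelow t w) i ^ 2) := by
        rw [← EuclideanSpace.real_norm_sq_eq, Real.sqrt_sq (norm_nonneg _)]
    _ ≤ √(∑ _i : ι, t ^ 2) := Real.sqrt_le_sqrt (sum_le_sum fun i _ => hcoord i)
    _ = √(Fintype.card ι) * t := by
        rw [sum_const, card_univ, nsmul_eq_mul, Real.sqrt_mul (Nat.cast_nonneg _),
          Real.sqrt_sq ht]

end Truncation

theorem Matrix.mulVec_dotProduct_le_of_abs_le_one {m n : Type*} [Fintype m] [Fintype n]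
    {A : Matrix m n ℝ} (hA : ∀ i j, |A i j| ≤ 1) (u : n → ℝ) (v : m → ℝ) :
    A *ᵥ u ⬝ᵥ v ≤ (∑ j, |u j|) * ∑ i, |v i| := by
  calc A *ᵥ u ⬝ᵥ v = ∑ i, ∑ j, A i j * u j * v i := by
        simp only [dotProduct, mulVec, sum_mul]
    _ ≤ ∑ i, ∑ j, |u j| * |v i| := sum_le_sum fun i _ => sum_le_sum fun j _ => by
        calc A i j * u j * v i ≤ |A i j| * (|u j| * |v i|) := by
              rw [← abs_mul, ← abs_mul, ← mul_assoc]
              exact le_abs_self _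
          _ ≤ |u j| * |v i| := mul_le_of_le_one_left (by positivity) (hA i j)
    _ = (∑ j, |u j|) * ∑ i, |v i| := by rw [sum_mul_sum, sum_comm]

theorem Real.sqrt_le_or_sqrt_le_of_le_mul {s a b : ℝ} (ha : 0 ≤ a) (hb : 0 ≤ b)
    (h : s ≤ a * b) : √s ≤ a ∨ √s ≤ b := by
  rw [← le_max_iff]
  refine Real.sqrt_le_iff.2 ⟨ha.trans (le_max_left a b), h.trans ?_⟩
  rw [sq]
  exact mul_le_mul (le_max_left a b) (le_max_right a b) hb (ha.trans (le_max_left a b))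

theorem stmt18_general {n : ℕ} (A : Matrix (Fin n) (Fin n) ℝ)
    (hAinf : ∀ i j, |A i j| ≤ 1) (θ : ℝ) (hθ0 : 0 < θ) (hθ : θ < 1 / 2) :
    ∃ u v : Fin n → ℝ,
      Real.sqrt (∑ i, u i ^ 2) ≤ 1 ∧ Real.sqrt (∑ i, v i ^ 2) ≤ 1 ∧
      (∀ i, u i ≠ 0 → θ / Real.sqrt n ≤ |u i|) ∧
      (∀ i, v i ≠ 0 → θ / Real.sqrt n ≤ |v i|) ∧
      (1 - 2 * θ) * opNorm A ≤ ∑ i, (∑ j, A i j * u j) * v i ∧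
      (1 - 2 * θ) * opNorm A ≤ (∑ i, |u i|) * (∑ i, |v i|) ∧
      (Real.sqrt ((1 - 2 * θ) * opNorm A) ≤ ∑ i, |u i| ∨
        Real.sqrt ((1 - 2 * θ) * opNorm A) ≤ ∑ i, |v i|) := by
  set T := LinearMap.toContinuousLinearMap (Matrix.toEuclideanLin A)
  set t := θ / √n
  have htrunc (w : EuclideanSpace ℝ (Fin n)) : ‖w - truncBelow t w‖ ≤ θ := by
    have := norm_sub_truncBelow_le (div_nonneg hθ0.le (Real.sqrt_nonneg n)) w
    rw [Fintype.card_fin, mul_div_left_comm] at this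
    exact this.trans (mul_le_of_le_one_right hθ0.le (div_self_le_one _))
  have hnorm (w : EuclideanSpace ℝ (Fin n)) (hw : ‖w‖ ≤ 1) :
      √(∑ i, truncBelow t w i ^ 2) ≤ 1 := by
    rw [← EuclideanSpace.real_norm_sq_eq, Real.sqrt_sq (norm_nonneg _)]
    exact (norm_truncBelow_le t w).trans hw
  obtain ⟨x, hx1, hxT⟩ := T.exists_norm_le_one_norm_apply_eq
  set u := truncBelow t x
  obtain ⟨w, hw1, hTuw⟩ := exists_norm_le_one_inner_eq_norm (T u)
  set v := truncBelow t w
  have hTu : (1 - θ) * ‖T‖ ≤ ‖T u‖ := T.one_sub_mul_norm_le_norm_apply hxT (htrunc x)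
  have hTuv : (1 - θ) * ‖T u‖ ≤ ⟪T u, v⟫ := one_sub_mul_norm_le_inner hTuw (htrunc w)
  have hinner : (1 - 2 * θ) * opNorm A ≤ A *ᵥ u ⬝ᵥ v := by
    rw [dotProduct_comm]
    change (1 - 2 * θ) * ‖T‖ ≤ ⟪T u, v⟫
    calc (1 - 2 * θ) * ‖T‖ ≤ (1 - θ) * ((1 - θ) * ‖T‖) := by
          nlinarith [mul_nonneg (sq_nonneg θ) (norm_nonneg T)]
      _ ≤ (1 - θ) * ‖T u‖ := by gcongr; linarith
      _ ≤ ⟪T u, v⟫ := hTuv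
  have hl1 := hinner.trans (mulVec_dotProduct_le_of_abs_le_one hAinf u v)
  exact ⟨u, v, hnorm x hx1, hnorm w hw1, fun i => le_abs_truncBelow_of_ne_zero,
    fun i => le_abs_truncBelow_of_ne_zero, hinner, hl1,
    Real.sqrt_le_or_sqrt_le_of_le_mul (by positivity) (by positivity) hl1⟩

/-- For a nonzero matrix with entries bounded by `1` there are unit-ball vectors `u, v` whose
nonzero coordinates all have absolute value at least `θ/√n`, with `⟨Au, v⟩ ≥ (1-2θ)‖A‖`;
consequently `‖u‖₁‖v‖₁ ≥ (1-2θ)‖A‖` and one of `‖u‖₁, ‖v‖₁` is at least `√((1-2θ)‖A‖)`. -/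
theorem stmt18 {n : ℕ} (A : Matrix (Fin n) (Fin n) ℝ) (hA : A ≠ 0)
    (hAinf : ∀ i j, |A i j| ≤ 1) (θ : ℝ) (hθ0 : 0 < θ) (hθ : θ < 1 / 2) :
    ∃ u v : Fin n → ℝ,
      Real.sqrt (∑ i, u i ^ 2) ≤ 1 ∧ Real.sqrt (∑ i, v i ^ 2) ≤ 1 ∧
      (∀ i, u i ≠ 0 → θ / Real.sqrt n ≤ |u i|) ∧
      (∀ i, v i ≠ 0 → θ / Real.sqrt n ≤ |v i|) ∧
      (1 - 2 * θ) * opNorm A ≤ ∑ i, (∑ j, A i j * u j) * v i ∧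
      (1 - 2 * θ) * opNorm A ≤ (∑ i, |u i|) * (∑ i, |v i|) ∧
      (Real.sqrt ((1 - 2 * θ) * opNorm A) ≤ ∑ i, |u i| ∨
        Real.sqrt ((1 - 2 * θ) * opNorm A) ≤ ∑ i, |v i|) :=
  stmt18_general A hAinf θ hθ0 hθ
end
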